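/- arXiv:1310.6674 — 2 statements merged into one kernel-verified Lean document; each statement's English description precedes it below -/
import Mathlib

section
/- Let R_d and R_i be Hermitian positive semidefinite M×M complex matrices satisfying the rank additivity property rank(R_d + R_i) = rank(R_d) + rank(R_i). Then R_d − R_d (R_d + R_i)† R_d = 0, where † denotes the Moore–Penrose pseudoinverse. (In other words, the error covariance of the linear MMSE estimator in the noiseless case vanishes.) -/
open Matrix
open scoped ComplexOrder

/-- The four Penrose equations characterizing the Moore–Penrose pseudoinverse. -/
def IsMoorePenrose {m n : Type*} [Fintype m] [Fintype n]
    (A : Matrix m n ℂ) (Ap : Matrix n m ℂ) : Prop :=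
  A * Ap * A = A ∧ Ap * A * Ap = Ap ∧ (A * Ap)ᴴ = A * Ap ∧ (Ap * A)ᴴ = Ap * A

/-!
Since `Rd ≤ Rd + Ri`, the kernel of `S = Rd + Ri` lies in that of `Rd`, so every generalized
inverse `G` of `S` (`S G S = S`) satisfies `Rd G S = Rd = S G Rd`. Expanding `S` on either side
gives `Rd - Rd G Rd = Rd G Ri = Ri G Rd`, whose range lies in both `range Rd` and `range Ri`;
rank additivity says exactly that these two ranges meet only in `0`.
-/

theorem LinearMap.disjoint_range_of_finrank_range_add_eq {K V W : Type*} [DivisionRing K]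
    [AddCommGroup V] [Module K V] [AddCommGroup W] [Module K W] [FiniteDimensional K W]
    {f g : V →ₗ[K] W}
    (h : Module.finrank K (range (f + g)) =
      Module.finrank K (range f) + Module.finrank K (range g)) :
    Disjoint (range f) (range g) := by
  have hsup := Submodule.finrank_mono (range_add_le f g)
  have hdim := Submodule.finrank_sup_add_finrank_inf_eq (range f) (range g)
  rw [disjoint_iff, ← Submodule.finrank_eq_zero]
  omega

namespace Matrix

variable {𝕜 m n : Type*} [RCLike 𝕜] [Fintype n]

theorem eq_zero_of_mul_eq_mul_of_disjoint_range {l k : Type*} [Fintype l] [Fintype k]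
    {A : Matrix m n 𝕜} {B : Matrix m l 𝕜} {X : Matrix n k 𝕜} {Y : Matrix l k 𝕜}
    (hAB : Disjoint (LinearMap.range A.mulVecLin) (LinearMap.range B.mulVecLin))
    (h : A * X = B * Y) : A * X = 0 := by
  refine ext_iff_mulVec.2 fun v => ?_
  have hA : (A * X) *ᵥ v ∈ LinearMap.range A.mulVecLin := ⟨X *ᵥ v, by simp⟩
  have hB : (A * X) *ᵥ v ∈ LinearMap.range B.mulVecLin := ⟨Y *ᵥ v, by simp [h]⟩
  rw [Submodule.disjoint_def.1 hAB _ hA hB, zero_mulVec]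

namespace PosSemidef

variable {A B : Matrix n n 𝕜}

theorem mulVec_eq_zero_of_add_mulVec_eq_zero (hA : A.PosSemidef) (hB : B.PosSemidef)
    {v : n → 𝕜} (h : (A + B) *ᵥ v = 0) : A *ᵥ v = 0 := by
  rw [← hA.dotProduct_mulVec_zero_iff]
  have hsum : star v ⬝ᵥ A *ᵥ v + star v ⬝ᵥ B *ᵥ v = 0 := by
    rw [← dotProduct_add, ← add_mulVec, h, dotProduct_zero]
  exact ((add_eq_zero_iff_of_nonneg (hA.dotProduct_mulVec_nonneg v)
    (hB.dotProduct_mulVec_nonneg v)).1 hsum).1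

theorem mul_eq_zero_of_add_mul_eq_zero [Fintype m] (hA : A.PosSemidef) (hB : B.PosSemidef)
    {X : Matrix n m 𝕜} (h : (A + B) * X = 0) : A * X = 0 :=
  ext_iff_mulVec.2 fun v => by
    rw [← mulVec_mulVec, hA.mulVec_eq_zero_of_add_mulVec_eq_zero hB
      (by rw [mulVec_mulVec, h, zero_mulVec]), zero_mulVec]

theorem mul_eq_zero_of_mul_add_eq_zero [Fintype m] (hA : A.PosSemidef) (hB : B.PosSemidef)
    {X : Matrix m n 𝕜} (h : X * (A + B) = 0) : X * A = 0 := by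
  have h' : (A + B) * Xᴴ = 0 := by
    rw [← (hA.add hB).isHermitian.eq, ← conjTranspose_mul, h, conjTranspose_zero]
  rw [← conjTranspose_eq_zero, conjTranspose_mul, hA.isHermitian.eq,
    hA.mul_eq_zero_of_add_mul_eq_zero hB h']

variable {G : Matrix n n 𝕜}

theorem mul_mul_add_eq_self (hA : A.PosSemidef) (hB : B.PosSemidef)
    (hG : (A + B) * G * (A + B) = A + B) : A * G * (A + B) = A := by
  classical
  have h := hA.mul_eq_zero_of_add_mul_eq_zero hB (X := 1 - G * (A + B))
    (by rw [Matrix.mul_sub, Matrix.mul_one, ← Matrix.mul_assoc, hG, sub_self])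
  rwa [Matrix.mul_sub, Matrix.mul_one, ← Matrix.mul_assoc, sub_eq_zero, eq_comm] at h

theorem add_mul_mul_eq_self (hA : A.PosSemidef) (hB : B.PosSemidef)
    (hG : (A + B) * G * (A + B) = A + B) : (A + B) * G * A = A := by
  classical
  have h := hA.mul_eq_zero_of_mul_add_eq_zero hB (X := 1 - (A + B) * G)
    (by rw [Matrix.sub_mul, Matrix.one_mul, hG, sub_self])
  rwa [Matrix.sub_mul, Matrix.one_mul, sub_eq_zero, eq_comm] at h

theorem sub_mul_mul_eq_zero_of_disjoint_range (hA : A.PosSemidef) (hB : B.PosSemidef)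
    (hG : (A + B) * G * (A + B) = A + B)
    (hAB : Disjoint (LinearMap.range A.mulVecLin) (LinearMap.range B.mulVecLin)) :
    A - A * G * A = 0 := by
  have hleft : A - A * G * A = A * (G * B) := by
    nth_rewrite 1 [← hA.mul_mul_add_eq_self hB hG]
    noncomm_ring
  have hright : A - A * G * A = B * (G * A) := by
    nth_rewrite 1 [← hA.add_mul_mul_eq_self hB hG]
    noncomm_ring
  rw [hleft]
  exact eq_zero_of_mul_eq_mul_of_disjoint_range hAB (hleft.symm.trans hright)

end PosSemidef
end Matrix

/-- for Hermitian PSD matrices `Rd`, `Ri` with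
`rank (Rd + Ri) = rank Rd + rank Ri`, the noiseless MMSE error covariance
`Rd - Rd (Rd + Ri)† Rd` vanishes. -/
theorem error_covariance_vanishes {M : ℕ}
    (Rd Ri : Matrix (Fin M) (Fin M) ℂ)
    (hRd : Rd.PosSemidef) (hRi : Ri.PosSemidef)
    (hrank : (Rd + Ri).rank = Rd.rank + Ri.rank)
    (Sp : Matrix (Fin M) (Fin M) ℂ)
    (hSp : IsMoorePenrose (Rd + Ri) Sp) :
    Rd - Rd * Sp * Rd = 0 :=
  hRd.sub_mul_mul_eq_zero_of_disjoint_range hRi hSp.1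
    (LinearMap.disjoint_range_of_finrank_range_add_eq (by rwa [← mulVecLin_add]))
end

section
/- Let P and Q be orthogonal projectors (Hermitian idempotent matrices) on ℂ^M, and let T = P Q. Then T† = Q T† P, i.e., the pseudoinverse of the product of two orthogonal projectors satisfies T† = Q (PQ)† P. -/
/-! The Penrose equations give `T† = T† T†ᴴ Tᴴ = Tᴴ T†ᴴ T†`, so `T†` inherits every
right or left factor that fixes `Tᴴ`; here `Tᴴ = Q P` is fixed by `P` on the right and by
`Q` on the left. -/

open Matrix

namespace IsMoorePenrose

variable {m n : Type*} [Fintype m] [Fintype n] {A : Matrix m n ℂ} {Ap : Matrix n m ℂ}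

theorem mul_mul_conjTranspose (h : IsMoorePenrose A Ap) : Ap * Apᴴ * Aᴴ = Ap :=
  calc Ap * Apᴴ * Aᴴ = Ap * (A * Ap)ᴴ := by rw [conjTranspose_mul, Matrix.mul_assoc]
    _ = Ap * A * Ap := by rw [h.2.2.1, Matrix.mul_assoc]
    _ = Ap := h.2.1

theorem conjTranspose_mul_mul (h : IsMoorePenrose A Ap) : Aᴴ * Apᴴ * Ap = Ap :=
  calc Aᴴ * Apᴴ * Ap = (Ap * A)ᴴ * Ap := by rw [conjTranspose_mul]
    _ = Ap := by rw [h.2.2.2, h.2.1]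

theorem mul_eq_self_of_conjTranspose_mul_eq (h : IsMoorePenrose A Ap) {P : Matrix m m ℂ}
    (hP : Aᴴ * P = Aᴴ) : Ap * P = Ap := by
  rw [← h.mul_mul_conjTranspose, Matrix.mul_assoc _ Aᴴ, hP]

theorem mul_eq_self_of_mul_conjTranspose_eq (h : IsMoorePenrose A Ap) {Q : Matrix n n ℂ}
    (hQ : Q * Aᴴ = Aᴴ) : Q * Ap = Ap := by
  rw [← h.conjTranspose_mul_mul, ← Matrix.mul_assoc, ← Matrix.mul_assoc, hQ]

end IsMoorePenrose

/-- for orthogonal projectors `P`, `Q` and `T = P Q`,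
the pseudoinverse satisfies `T† = Q T† P`. -/
theorem pseudoinverse_of_projector_product {M : ℕ}
    (P Q : Matrix (Fin M) (Fin M) ℂ)
    (hPh : Pᴴ = P) (hP2 : P * P = P) (hQh : Qᴴ = Q) (hQ2 : Q * Q = Q)
    (Tp : Matrix (Fin M) (Fin M) ℂ) (hTp : IsMoorePenrose (P * Q) Tp) :
    Tp = Q * Tp * P := by
  have hT : (P * Q)ᴴ = Q * P := by rw [conjTranspose_mul, hPh, hQh]
  have hTpP : Tp * P = Tp :=
    hTp.mul_eq_self_of_conjTranspose_mul_eq (by rw [hT, Matrix.mul_assoc, hP2])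
  have hQTp : Q * Tp = Tp :=
    hTp.mul_eq_self_of_mul_conjTranspose_eq (by rw [hT, ← Matrix.mul_assoc, hQ2])
  rw [hQTp, hTpP]
end
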